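/- If a proper lower-semicontinuous function φ : ℝⁿ → ℝ satisfies φ = M^1 M_1 φ on ℝⁿ (where M_1 and M^1 are the lower and upper Moreau envelopes with parameter 1), then φ is 1-weakly convex: x ↦ φ(x) + (1/2)‖x‖² is convex. -/

import Mathlib

/-!
Since `‖y - x‖ ^ 2 / 2 = ‖y‖ ^ 2 / 2 - ⟪y, x⟫ + ‖x‖ ^ 2 / 2`, an identity `φ = M^1 g` exhibits
`φ + ‖·‖ ^ 2 / 2` as the pointwise supremum over `y` of the affine functions
`x ↦ g y - ‖y‖ ^ 2 / 2 + ⟪y, x⟫`, and a real-valued supremum of affine functions is convex.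
-/

open scoped RealInnerProductSpace
open Filter Topology

noncomputable section

/-- Lower Moreau envelope with parameter 1 (extended-real valued). -/
def lowerEnv1 {n : ℕ} (φ : EuclideanSpace ℝ (Fin n) → ℝ)
    (x : EuclideanSpace ℝ (Fin n)) : EReal :=
  ⨅ y, ((φ y + ‖y - x‖ ^ 2 / 2 : ℝ) : EReal)

/-- Upper Moreau envelope with parameter 1 of an extended-real valued function. -/
def upperEnv1 {n : ℕ} (g : EuclideanSpace ℝ (Fin n) → EReal)
    (x : EuclideanSpace ℝ (Fin n)) : EReal :=
  ⨆ y, (g y - ((‖y - x‖ ^ 2 / 2 : ℝ) : EReal))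

theorem EReal.iSup_add_coe {ι : Sort*} (f : ι → EReal) (r : ℝ) :
    (⨆ i, f i) + r = ⨆ i, (f i + r) := by
  refine le_antisymm ?_ (iSup_le fun i => by gcongr; exact le_iSup f i)
  rw [← EReal.le_sub_iff_add_le (.inl (EReal.coe_ne_bot r)) (.inl (EReal.coe_ne_top r))]
  exact iSup_le fun i => (EReal.le_sub_iff_add_le (.inl (EReal.coe_ne_bot r))
    (.inl (EReal.coe_ne_top r))).2 (le_iSup (fun i => f i + r) i)

theorem EReal.sub_coe_add_coe (e : EReal) (r s : ℝ) : e - r + s = e + ↑(s - r) := by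
  rw [sub_eq_add_neg, add_assoc, ← EReal.coe_neg, ← EReal.coe_add, neg_add_eq_sub]

theorem convexOn_univ_of_eq_iSup_add_linear {ι E : Type*} [AddCommGroup E] [Module ℝ E]
    {F : E → ℝ} (c : ι → EReal) (ℓ : ι → E →ₗ[ℝ] ℝ)
    (hF : ∀ x, (F x : EReal) = ⨆ i, c i + ℓ i x) : ConvexOn ℝ Set.univ F := by
  refine ⟨convex_univ, fun x₁ _ x₂ _ a b ha hb hab => ?_⟩
  suffices (F (a • x₁ + b • x₂) : EReal) ≤ ↑(a * F x₁ + b * F x₂) by exact_mod_cast this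
  rw [hF]
  refine iSup_le fun i => ?_
  have h₁ : c i + ℓ i x₁ ≤ F x₁ := hF x₁ ▸ le_iSup (fun i => c i + ℓ i x₁) i
  have h₂ : c i + ℓ i x₂ ≤ F x₂ := hF x₂ ▸ le_iSup (fun i => c i + ℓ i x₂) i
  generalize c i = t at h₁ h₂ ⊢
  induction t using EReal.rec with
  | bot => simp
  | coe t =>
    norm_cast at h₁ h₂ ⊢
    calc t + ℓ i (a • x₁ + b • x₂) = a * (t + ℓ i x₁) + b * (t + ℓ i x₂) := by
          simp only [map_add, map_smul, smul_eq_mul]; linear_combination (-t) * hab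
      _ ≤ a * F x₁ + b * F x₂ := by gcongr
  | top => simp at h₁

theorem upperEnv1_add_sq_div_two {n : ℕ} (g : EuclideanSpace ℝ (Fin n) → EReal)
    (x : EuclideanSpace ℝ (Fin n)) :
    upperEnv1 g x + ((‖x‖ ^ 2 / 2 : ℝ) : EReal) =
      ⨆ y, (g y - ((‖y‖ ^ 2 / 2 : ℝ) : EReal)) + ⟪y, x⟫ := by
  rw [upperEnv1, EReal.iSup_add_coe]
  refine iSup_congr fun y => ?_
  rw [EReal.sub_coe_add_coe, EReal.sub_coe_add_coe, norm_sub_sq_real]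
  congr 2
  ring

theorem convexOn_add_sq_div_two_of_eq_upperEnv1 {n : ℕ} {φ : EuclideanSpace ℝ (Fin n) → ℝ}
    {g : EuclideanSpace ℝ (Fin n) → EReal} (hφ : ∀ x, upperEnv1 g x = φ x) :
    ConvexOn ℝ Set.univ (fun x => φ x + ‖x‖ ^ 2 / 2) :=
  convexOn_univ_of_eq_iSup_add_linear (fun y => g y - ((‖y‖ ^ 2 / 2 : ℝ) : EReal)) (innerₛₗ ℝ)
    fun x => by
      simp only [innerₛₗ_apply_apply, EReal.coe_add, ← hφ x, upperEnv1_add_sq_div_two]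

theorem stmt_10_general {n : ℕ} (φ : EuclideanSpace ℝ (Fin n) → ℝ)
    (heq : ∀ x, upperEnv1 (lowerEnv1 φ) x = (φ x : EReal)) :
    ConvexOn ℝ Set.univ (fun x => φ x + ‖x‖ ^ 2 / 2) :=
  convexOn_add_sq_div_two_of_eq_upperEnv1 heq

theorem stmt_10 {n : ℕ} (φ : EuclideanSpace ℝ (Fin n) → ℝ)
    (hlsc : LowerSemicontinuous φ)
    (heq : ∀ x, upperEnv1 (lowerEnv1 φ) x = (φ x : EReal)) :
    ConvexOn ℝ Set.univ (fun x => φ x + ‖x‖ ^ 2 / 2) :=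
  stmt_10_general φ heq
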